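/- arXiv:0711.3594 — 2 statements merged into one kernel-verified Lean document; each statement's English description precedes it below -/
import Mathlib

section
/- Every finite ultrametric space with n distinct points can be isometrically embedded into the (n−1)-dimensional Euclidean space R^{n-1}. -/
lemma ultra_qform {X : Type*} [MetricSpace X]
    (hultra : ∀ x y z : X, dist x z ≤ max (dist x y) (dist y z))
    (S : Finset X) :
    ∀ D : ℝ, (∀ x ∈ S, ∀ y ∈ S, dist x y ≤ D) → ∀ c : X → ℝ,
      0 ≤ ∑ x ∈ S, ∑ y ∈ S, c x * c y * (D ^ 2 - dist x y ^ 2) := by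
  classical
  induction S using Finset.strongInduction with
  | _ S ih =>
  intro D hD c
  rcases S.eq_empty_or_nonempty with rfl | hS
  · simp
  have hSS : (S ×ˢ S).Nonempty := hS.product hS
  obtain ⟨⟨p, q⟩, hpq, hD'⟩ := Finset.exists_mem_eq_sup' hSS (fun z : X × X => dist z.1 z.2)
  rw [Finset.mem_product] at hpq
  have hle : ∀ x ∈ S, ∀ y ∈ S, dist x y ≤ dist p q := by
    intro x hx y hy
    exact le_of_le_of_eq (Finset.le_sup' (fun z : X × X => dist z.1 z.2)
      (show (x, y) ∈ S ×ˢ S from Finset.mem_product.mpr ⟨hx, hy⟩)) hD'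
  have key : 0 ≤ ∑ x ∈ S, ∑ y ∈ S, c x * c y * (dist p q ^ 2 - dist x y ^ 2) := by
    rcases eq_or_lt_of_le (dist_nonneg : (0:ℝ) ≤ dist p q) with h0 | h0
    · have hz : ∀ x ∈ S, ∀ y ∈ S, dist x y = 0 := fun x hx y hy =>
        le_antisymm ((hle x hx y hy).trans h0.ge) dist_nonneg
      have : ∀ x ∈ S, ∀ y ∈ S, c x * c y * (dist p q ^ 2 - dist x y ^ 2) = 0 := by
        intro x hx y hy
        rw [hz x hx y hy, ← h0]
        ring
      rw [Finset.sum_congr rfl fun x hx => Finset.sum_eq_zero (this x hx)]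
      simp
    · set T : Finset X := S.filter (fun x => dist p x < dist p q) with hT
      set U : Finset X := S.filter (fun x => ¬ dist p x < dist p q) with hU
      have hTsub : T ⊆ S := Finset.filter_subset _ _
      have hUsub : U ⊆ S := Finset.filter_subset _ _
      have hpT : p ∈ T := by
        rw [hT, Finset.mem_filter]
        refine ⟨hpq.1, ?_⟩
        rw [dist_self]
        exact h0
      have hqU : q ∈ U := by
        rw [hU, Finset.mem_filter]
        exact ⟨hpq.2, lt_irrefl _⟩
      have hcardT : T ⊂ S := ⟨hTsub, fun h => by
        have := Finset.mem_filter.mp (h hpq.2)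
        exact absurd this.2 (lt_irrefl _)⟩
      have hcardU : U ⊂ S := ⟨hUsub, fun h => by
        have := Finset.mem_filter.mp (h hpq.1)
        rw [dist_self] at this
        exact absurd h0 (by simpa using this.2)⟩
      have hcross : ∀ x ∈ T, ∀ y ∈ U, dist x y = dist p q := by
        intro x hx y hy
        rw [hT, Finset.mem_filter] at hx
        rw [hU, Finset.mem_filter] at hy
        have hyD : dist p y = dist p q := le_antisymm (hle p hpq.1 y hy.1) (not_lt.mp hy.2)
        refine le_antisymm (hle x hx.1 y hy.1) ?_
        have h2 := hultra p x y
        rw [hyD] at h2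
        rcases max_cases (dist p x) (dist x y) with ⟨he, _⟩ | ⟨he, _⟩
        · rw [he] at h2; linarith [hx.2]
        · rwa [he] at h2
      have hsplit := Finset.sum_filter_add_sum_filter_not S (fun x => dist p x < dist p q)
        (fun x => ∑ y ∈ S, c x * c y * (dist p q ^ 2 - dist x y ^ 2))
      rw [← hU, ← hT] at hsplit
      rw [← hsplit]
      have inner_split : ∀ x : X, (∑ y ∈ S, c x * c y * (dist p q ^ 2 - dist x y ^ 2)) =
          (∑ y ∈ T, c x * c y * (dist p q ^ 2 - dist x y ^ 2)) +
          (∑ y ∈ U, c x * c y * (dist p q ^ 2 - dist x y ^ 2)) := by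
        intro x
        have := Finset.sum_filter_add_sum_filter_not S (fun z => dist p z < dist p q)
          (fun y => c x * c y * (dist p q ^ 2 - dist x y ^ 2))
        rw [← hU, ← hT] at this
        exact this.symm
      have hT1 : 0 ≤ ∑ x ∈ T, ∑ y ∈ T, c x * c y * (dist p q ^ 2 - dist x y ^ 2) :=
        ih T hcardT _ (fun x hx y hy => hle x (hTsub hx) y (hTsub hy)) c
      have hU1 : 0 ≤ ∑ x ∈ U, ∑ y ∈ U, c x * c y * (dist p q ^ 2 - dist x y ^ 2) :=
        ih U hcardU _ (fun x hx y hy => hle x (hUsub hx) y (hUsub hy)) c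
      have e1 : ∑ x ∈ T, ∑ y ∈ S, c x * c y * (dist p q ^ 2 - dist x y ^ 2)
          = ∑ x ∈ T, ∑ y ∈ T, c x * c y * (dist p q ^ 2 - dist x y ^ 2) := by
        rw [Finset.sum_congr rfl fun x _ => inner_split x, Finset.sum_add_distrib]
        have hz : ∑ x ∈ T, ∑ y ∈ U, c x * c y * (dist p q ^ 2 - dist x y ^ 2) = 0 := by
          refine Finset.sum_eq_zero fun x hx => Finset.sum_eq_zero fun y hy => ?_
          rw [hcross x hx y hy]; ring
        rw [hz, add_zero]
      have e2 : ∑ x ∈ U, ∑ y ∈ S, c x * c y * (dist p q ^ 2 - dist x y ^ 2)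
          = ∑ x ∈ U, ∑ y ∈ U, c x * c y * (dist p q ^ 2 - dist x y ^ 2) := by
        rw [Finset.sum_congr rfl fun x _ => inner_split x, Finset.sum_add_distrib]
        have hz : ∑ x ∈ U, ∑ y ∈ T, c x * c y * (dist p q ^ 2 - dist x y ^ 2) = 0 := by
          refine Finset.sum_eq_zero fun x hx => Finset.sum_eq_zero fun y hy => ?_
          have h3 : dist y x = dist p q := hcross y hy x hx
          rw [dist_comm] at h3
          rw [h3]; ring
        rw [hz, zero_add]
      rw [e1, e2]
      exact add_nonneg hT1 hU1
  have hD'leD : dist p q ≤ D := hD p hpq.1 q hpq.2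
  have expand : ∑ x ∈ S, ∑ y ∈ S, c x * c y * (D ^ 2 - dist x y ^ 2)
      = (∑ x ∈ S, ∑ y ∈ S, c x * c y * (dist p q ^ 2 - dist x y ^ 2))
        + (D ^ 2 - dist p q ^ 2) * (∑ x ∈ S, c x) ^ 2 := by
    rw [sq (∑ x ∈ S, c x), Finset.sum_mul_sum, Finset.mul_sum, ← Finset.sum_add_distrib]
    refine Finset.sum_congr rfl fun x _ => ?_
    rw [Finset.mul_sum, ← Finset.sum_add_distrib]
    exact Finset.sum_congr rfl fun y _ => by ring
  rw [expand]
  have h4 : 0 ≤ (D ^ 2 - dist p q ^ 2) * (∑ x ∈ S, c x) ^ 2 := by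
    apply mul_nonneg _ (sq_nonneg _)
    have := dist_nonneg (x := p) (y := q)
    nlinarith
  linarith


open Finset Module Matrix

/-- Every finite ultrametric space with `n` points can be isometrically
embedded into `(n-1)`-dimensional Euclidean space. -/
theorem finite_ultrametric_embeds_euclidean {X : Type*} [Fintype X] [MetricSpace X]
    (hultra : ∀ x y z : X, dist x z ≤ max (dist x y) (dist y z)) :
    ∃ φ : X → EuclideanSpace ℝ (Fin (Fintype.card X - 1)),
      ∀ x y : X, dist (φ x) (φ y) = dist x y := by
  classical
  rcases isEmpty_or_nonempty X with hE | hNE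
  · exact ⟨fun _ => 0, fun x _ => (hE.false x).elim⟩
  haveI := hNE
  obtain ⟨x₀⟩ := id hNE
  have huniv : ((Finset.univ : Finset X) ×ˢ Finset.univ).Nonempty :=
    (Finset.univ_nonempty (α := X)).product (Finset.univ_nonempty (α := X))
  set D : ℝ := (Finset.univ ×ˢ Finset.univ).sup' huniv (fun z : X × X => dist z.1 z.2) with hDdef
  have hD : ∀ x y : X, dist x y ≤ D := fun x y =>
    Finset.le_sup' (fun z : X × X => dist z.1 z.2)
      (show (x, y) ∈ Finset.univ ×ˢ Finset.univ from Finset.mem_product.mpr ⟨mem_univ _, mem_univ _⟩)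
  set M : Matrix X X ℝ := Matrix.of (fun x y => (D ^ 2 - dist x y ^ 2) / 2) with hM
  have hPSD : M.PosSemidef := by
    refine Matrix.PosSemidef.of_dotProduct_mulVec_nonneg ?_ ?_
    · ext i j
      simp [hM, Matrix.conjTranspose_apply, dist_comm]
    · intro c
      have h1 : dotProduct (star c) (M *ᵥ c)
          = (1 / 2) * (∑ x, ∑ y, c x * c y * (D ^ 2 - dist x y ^ 2)) := by
        simp only [dotProduct, Matrix.mulVec, star_trivial, hM, Matrix.of_apply]
        rw [Finset.mul_sum]
        refine Finset.sum_congr rfl fun x _ => ?_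
        rw [Finset.mul_sum, Finset.mul_sum]
        exact Finset.sum_congr rfl fun y _ => by ring
      rw [h1]
      have := ultra_qform hultra Finset.univ D (fun x _ y _ => hD x y) c
      linarith
  obtain ⟨B, hB⟩ : ∃ B : Matrix X X ℝ, M = Bᴴ * B := by
    open scoped MatrixOrder in
    obtain ⟨B, hB⟩ := CStarAlgebra.nonneg_iff_eq_star_mul_self.mp hPSD.nonneg
    exact ⟨B, by rw [hB, Matrix.star_eq_conjTranspose]⟩
  have hGram : ∀ x y : X, ∑ i, B i x * B i y = (D ^ 2 - dist x y ^ 2) / 2 := by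
    intro x y
    have : M x y = (Bᴴ * B) x y := by rw [← hB]
    simpa [Matrix.mul_apply, Matrix.conjTranspose_apply, hM] using this.symm
  set φ₀ : X → EuclideanSpace ℝ X := fun x => WithLp.toLp 2 (fun i => B i x) with hφ₀
  have hdist0 : ∀ x y : X, dist (φ₀ x) (φ₀ y) = dist x y := by
    intro x y
    rw [EuclideanSpace.dist_eq]
    have hsum : ∑ i, dist (φ₀ x i) (φ₀ y i) ^ 2 = dist x y ^ 2 := by
      have e : ∀ i : X, dist (φ₀ x i) (φ₀ y i) ^ 2
          = B i x * B i x - 2 * (B i x * B i y) + B i y * B i y := by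
        intro i
        rw [Real.dist_eq, sq_abs]
        simp only [hφ₀, PiLp.toLp_apply]
        ring
      rw [Finset.sum_congr rfl fun i _ => e i]
      rw [Finset.sum_add_distrib, Finset.sum_sub_distrib, ← Finset.mul_sum]
      rw [hGram x x, hGram x y, hGram y y]
      simp only [dist_self]
      ring
    rw [hsum, Real.sqrt_sq dist_nonneg]
  set v : X → EuclideanSpace ℝ X := fun x => φ₀ x - φ₀ x₀ with hv
  have hdistv : ∀ x y : X, dist (v x) (v y) = dist x y := by
    intro x y
    rw [hv]
    simp only [dist_eq_norm, sub_sub_sub_cancel_right]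
    rw [← dist_eq_norm]
    exact hdist0 x y
  set s : Finset (EuclideanSpace ℝ X) := (Finset.univ.erase x₀).image v with hs
  set V : Submodule ℝ (EuclideanSpace ℝ X) := Submodule.span ℝ (s : Set (EuclideanSpace ℝ X))
    with hV
  have hmemV : ∀ x : X, v x ∈ V := by
    intro x
    by_cases hx : x = x₀
    · rw [hx, hv]
      simp only [sub_self]
      exact V.zero_mem
    · exact Submodule.subset_span (Finset.mem_coe.mpr
        (Finset.mem_image.mpr ⟨x, Finset.mem_erase.mpr ⟨hx, mem_univ x⟩, rfl⟩))
  have hdim : finrank ℝ V ≤ Fintype.card X - 1 := by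
    refine (finrank_span_finset_le_card s).trans ?_
    calc s.card ≤ (Finset.univ.erase x₀).card := Finset.card_image_le
      _ = Fintype.card X - 1 := by rw [Finset.card_erase_of_mem (mem_univ x₀), Finset.card_univ]
  set d : ℕ := finrank ℝ V with hd
  set e := (stdOrthonormalBasis ℝ V).repr with he
  set m : ℕ := Fintype.card X - 1 with hm
  set j : EuclideanSpace ℝ (Fin d) → EuclideanSpace ℝ (Fin m) :=
    fun f => WithLp.toLp 2 (fun i : Fin m => if h : (i : ℕ) < d then f ⟨i, h⟩ else 0) with hj
  have hdm : d ≤ m := hdim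
  have hjdist : ∀ a b : EuclideanSpace ℝ (Fin d), dist (j a) (j b) = dist a b := by
    intro a b
    rw [EuclideanSpace.dist_eq, EuclideanSpace.dist_eq]
    congr 1
    set F : ℕ → ℝ := fun i => if h : i < d then dist (a ⟨i, h⟩) (b ⟨i, h⟩) ^ 2 else 0 with hF
    have lhs_eq : ∑ i : Fin m, dist (j a i) (j b i) ^ 2 = ∑ i : Fin m, F (i : ℕ) := by
      refine Finset.sum_congr rfl fun i _ => ?_
      by_cases h : (i : ℕ) < d
      · simp [hj, hF, dif_pos h]
      · simp [hj, hF, dif_neg h]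
    have rhs_eq : ∑ i : Fin d, dist (a i) (b i) ^ 2 = ∑ i : Fin d, F (i : ℕ) := by
      refine Finset.sum_congr rfl fun i _ => ?_
      rw [hF]
      simp only [dif_pos i.isLt, Fin.eta]
    rw [lhs_eq, rhs_eq, Fin.sum_univ_eq_sum_range F m, Fin.sum_univ_eq_sum_range F d]
    refine (Finset.sum_subset (Finset.range_subset_range.mpr hdm) fun i _ hi => ?_).symm
    rw [Finset.mem_range, not_lt] at hi
    rw [hF]
    exact dif_neg (by omega)
  refine ⟨fun x => j (e ⟨v x, hmemV x⟩), fun x y => ?_⟩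
  rw [hjdist, e.dist_map, Subtype.dist_eq, hdistv]
end

section
/- Let V be a finite set with metric d, let C ⊆ V be a cluster, and let x_i, x_j ∈ C with D(x_i, x_j) ≥ d₀ > 0, where D is the transitive distance restricted to paths within C. Then there exists a partition C = C₁ ∪ C₂ into nonempty disjoint parts with x_i ∈ C₁, x_j ∈ C₂, and d(C₁, C₂) ≥ d₀. -/
open scoped Classical

/-- The cost of a path (list of vertices): the maximum distance between
consecutive vertices (0 for trivial paths). -/
noncomputable def pathCost {V : Type*} [MetricSpace V] : List V → ℝ
  | [] => 0
  | [_] => 0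
  | a :: b :: t => max (dist a b) (pathCost (b :: t))

/-- `l` is a path from `x` to `y`: a nonempty list starting at `x` and ending at `y`. -/
def IsPathList {V : Type*} (x y : V) (l : List V) : Prop :=
  l.head? = some x ∧ l.getLast? = some y

/-- The transitive distance: the minimum (infimum) over all paths from `x` to `y`
of the maximum edge length along the path. -/
noncomputable def transDist {V : Type*} [MetricSpace V] (x y : V) : ℝ :=
  sInf {c | ∃ l : List V, IsPathList x y l ∧ pathCost l = c}

/-- The distance between two finite sets: the minimum pairwise distance. -/
noncomputable def finsetDist {V : Type*} [MetricSpace V] (A B : Finset V) : ℝ :=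
  sInf {r | ∃ a ∈ A, ∃ b ∈ B, dist a b = r}

/-- `clusters` is a partition of `V` into clusters. -/
def IsClustering {V : Type*} (clusters : Finset (Finset V)) : Prop :=
  ∀ x : V, ∃! C, C ∈ clusters ∧ x ∈ C

/-- A clustering is consistent with the metric if for every cluster `C`, every
point `y` outside `C`, and every partition of `C` into two nonempty parts `C₁`
and `C₂`, the distance between `C₁` and `C₂` is strictly smaller than the
distance from `y` to `C`. -/
def Consistent {V : Type*} [MetricSpace V] (clusters : Finset (Finset V)) : Prop :=
  ∀ C ∈ clusters, ∀ y : V, y ∉ C → ∀ C1 C2 : Finset V,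
    C1.Nonempty → C2.Nonempty → Disjoint C1 C2 → C1 ∪ C2 = C →
    finsetDist C1 C2 < finsetDist {y} C

/-- The transitive distance restricted to paths inside a set `S`. -/
noncomputable def transDistIn {V : Type*} [MetricSpace V] (S : Set V) (x y : V) : ℝ :=
  sInf {c | ∃ l : List V, IsPathList x y l ∧ (∀ v ∈ l, v ∈ S) ∧ pathCost l = c}


lemma pathCost_nonneg {V : Type*} [MetricSpace V] (l : List V) : 0 ≤ pathCost l := by
  match l with
  | [] => simp [pathCost]
  | [a] => simp [pathCost]
  | a :: b :: t =>
    have := pathCost_nonneg (b :: t)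
    simp only [pathCost]
    exact le_max_of_le_right this

lemma pathCost_append_singleton {V : Type*} [MetricSpace V] (a b : V) (l : List V)
    (h : l.getLast? = some a) :
    pathCost (l ++ [b]) = max (pathCost l) (dist a b) := by
  match l with
  | [] => simp at h
  | [x] =>
    simp only [List.getLast?_singleton, Option.some.injEq] at h
    subst h
    simp [pathCost, dist_nonneg]
  | x :: y :: t =>
    have h' : (y :: t).getLast? = some a := by
      rwa [List.getLast?_cons_cons] at h
    have ih := pathCost_append_singleton a b (y :: t) h'
    show pathCost (x :: y :: (t ++ [b])) = _
    rw [pathCost, ← List.cons_append, ih, pathCost, max_assoc]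

/-- If the transitive distance within `C` between `xi` and `xj` is at least
`d₀ > 0`, then `C` can be partitioned into two nonempty disjoint parts
separating `xi` from `xj` whose set distance is at least `d₀`. -/
theorem exists_partition_of_transDistIn_ge {V : Type*} [Fintype V] [MetricSpace V]
    (C : Finset V) (xi xj : V) (hi : xi ∈ C) (hj : xj ∈ C) (d0 : ℝ) (hd0 : 0 < d0)
    (h : d0 ≤ transDistIn (C : Set V) xi xj) :
    ∃ C1 C2 : Finset V, C1.Nonempty ∧ C2.Nonempty ∧ Disjoint C1 C2 ∧
      C1 ∪ C2 = C ∧ xi ∈ C1 ∧ xj ∈ C2 ∧ d0 ≤ finsetDist C1 C2 := by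
  set C1 : Finset V := C.filter (fun x => ∃ l : List V, IsPathList xi x l ∧
    (∀ v ∈ l, v ∈ (C : Set V)) ∧ pathCost l < d0) with hC1
  set C2 : Finset V := C \ C1 with hC2
  have hC1sub : C1 ⊆ C := Finset.filter_subset _ _
  have hxi1 : xi ∈ C1 := by
    refine Finset.mem_filter.mpr ⟨hi, [xi], ⟨rfl, rfl⟩, ?_, ?_⟩
    · intro v hv; simp at hv; subst hv; exact hi
    · simpa [pathCost] using hd0
  have hxj1 : xj ∉ C1 := by
    intro hmem
    obtain ⟨-, l, hl, hlC, hlt⟩ := Finset.mem_filter.mp hmem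
    have hle : transDistIn (C : Set V) xi xj ≤ pathCost l := by
      apply csInf_le
      · refine ⟨0, ?_⟩
        rintro c ⟨m, -, -, rfl⟩
        exact pathCost_nonneg m
      · exact ⟨l, hl, hlC, rfl⟩
    linarith
  have hxj2 : xj ∈ C2 := Finset.mem_sdiff.mpr ⟨hj, hxj1⟩
  refine ⟨C1, C2, ⟨xi, hxi1⟩, ⟨xj, hxj2⟩, Finset.disjoint_sdiff, ?_, hxi1, hxj2, ?_⟩
  · rw [hC2, Finset.union_sdiff_of_subset hC1sub]
  · refine le_csInf ⟨dist xi xj, ⟨xi, hxi1, xj, hxj2, rfl⟩⟩ ?_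
    rintro r ⟨a, ha, b, hb, rfl⟩
    by_contra hlt
    push_neg at hlt
    obtain ⟨haC, l, hl, hlC, hlc⟩ := Finset.mem_filter.mp ha
    have hb2 := Finset.mem_sdiff.mp hb
    apply hb2.2
    refine Finset.mem_filter.mpr ⟨hb2.1, l ++ [b], ?_, ?_, ?_⟩
    · constructor
      · rcases l with _ | ⟨x, t⟩
        · simp [IsPathList] at hl
        · simpa using hl.1
      · simp
    · intro v hv
      rcases List.mem_append.mp hv with hv | hv
      · exact hlC v hv
      · simp at hv; subst hv; exact hb2.1
    · rw [pathCost_append_singleton a b l hl.2]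
      exact max_lt hlc hlt
end
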